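/- Let G be the graph obtained by joining any two vertices of C_3(a,a,a) (or of C_5) to the central vertex of a star K_{1,s}. Then for any nonzero eigenvalue λ of A(G), m_λ(G) ≤ 2. -/

import Mathlib

open Module

attribute [local instance] Classical.propDecidable

noncomputable def adjMat {V : Type*} [Fintype V] (G : SimpleGraph V) : Matrix V V ℝ :=
  Matrix.of fun u v => if G.Adj u v then 1 else 0

noncomputable def eigMult {V : Type*} [Fintype V] (G : SimpleGraph V) (μ : ℝ) : ℕ :=
  Module.finrank ℝ (Module.End.eigenspace (adjMat G).mulVecLin μ)

def HasEig {V : Type*} [Fintype V] (G : SimpleGraph V) (μ : ℝ) : Prop :=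
  Module.End.HasEigenvalue (adjMat G).mulVecLin μ

def IsMatchingSet {V : Type*} (G : SimpleGraph V) (M : Finset (Sym2 V)) : Prop :=
  (∀ e ∈ M, e ∈ G.edgeSet) ∧
  ∀ e ∈ M, ∀ f ∈ M, e ≠ f → ∀ v, v ∈ e → v ∉ f

def IsInducedMatchingSet {V : Type*} (G : SimpleGraph V) (M : Finset (Sym2 V)) : Prop :=
  IsMatchingSet G M ∧
  ∀ e ∈ M, ∀ f ∈ M, e ≠ f → ∀ u v, u ∈ e → v ∈ f → ¬ G.Adj u v

noncomputable def matchNum {V : Type*} [Fintype V] (G : SimpleGraph V) : ℕ :=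
  sSup {k | ∃ M, IsMatchingSet G M ∧ M.card = k}

noncomputable def indMatchNum {V : Type*} [Fintype V] (G : SimpleGraph V) : ℕ :=
  sSup {k | ∃ M, IsInducedMatchingSet G M ∧ M.card = k}

noncomputable def cyclomatic {V : Type*} [Fintype V] (G : SimpleGraph V) : ℕ :=
  G.edgeSet.ncard + 1 - Fintype.card V

def delV {V : Type*} (G : SimpleGraph V) (v : V) : SimpleGraph {u : V // u ≠ v} :=
  G.induce {u : V | u ≠ v}

def starGraph (n : ℕ) : SimpleGraph (Fin (n + 1)) :=
  SimpleGraph.fromRel (fun u _ => u = 0)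

def triStar (a : ℕ) : SimpleGraph (Fin 3 ⊕ Fin 3 × Fin a) :=
  SimpleGraph.fromRel (fun x y =>
    (∃ i j, x = Sum.inl i ∧ y = Sum.inl j) ∨
    (∃ i k, x = Sum.inl i ∧ y = Sum.inr (i, k)))

def joinStar {V : Type*} (B : SimpleGraph V) (p q : V) (s : ℕ) :
    SimpleGraph (V ⊕ (Unit ⊕ Fin s)) :=
  SimpleGraph.fromRel (fun x y =>
    (∃ a b, x = Sum.inl a ∧ y = Sum.inl b ∧ B.Adj a b) ∨
    (x = Sum.inl p ∧ y = Sum.inr (Sum.inl ())) ∨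
    (x = Sum.inl q ∧ y = Sum.inr (Sum.inl ())) ∨
    (∃ k, x = Sum.inr (Sum.inl ()) ∧ y = Sum.inr (Sum.inr k)))

/-
Let `c` be the centre of the star and `x` a `μ`-eigenvector of `G` with `μ ≠ 0`. If `x c = 0`,
then every leaf value vanishes (`x c = μ x ℓ`), and the restriction `y` of `x` to `B` is a
`μ`-eigenvector of `B` with `y p + y q = 0` (the eigen-equation at `c`). Hence
`m_μ(G) ≤ 1 + dim {y ∈ E_μ(B) | y p + y q = 0}`, and it suffices to find a vertex at which every
such `y` vanishing there vanishes identically.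

In `C₅`, `y p = y q = 0` with `p, q` at distance at most two, and two such zeros propagate
around the cycle through `μ y u = y (u + 1) + y (u - 1)`. In `C₃(a,a,a)`, a pendant vertex at
`i` carries `y i / μ`, so `(μ² + μ - a) y i = μ ∑ⱼ y j`: if `μ² + μ - a ≠ 0` the three triangle
values are equal, and otherwise they sum to zero while `y p + y q = 0` is a second, independent
relation between them.
-/

section LinearAlgebra
variable {K M N : Type*} [Field K] [AddCommGroup M] [Module K M] [FiniteDimensional K M]
  [AddCommGroup N] [Module K N] [FiniteDimensional K N]

lemma finrank_le_finrank_add_one_of_injOn_ker (S : Submodule K M) (T : Submodule K N)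
    (φ : M →ₗ[K] K) (f : M →ₗ[K] N) (hmaps : ∀ x ∈ S, φ x = 0 → f x ∈ T)
    (hinj : ∀ x ∈ S, φ x = 0 → f x = 0 → x = 0) :
    finrank K S ≤ finrank K T + 1 := by
  let ψ := φ.comp S.subtype
  have hker : finrank K (LinearMap.ker ψ) ≤ finrank K T := by
    let g : LinearMap.ker ψ →ₗ[K] T :=
      (f.comp (S.subtype.comp (LinearMap.ker ψ).subtype)).codRestrict T
        fun x => hmaps x x.1.2 x.2
    refine LinearMap.finrank_le_finrank_of_injective (f := g) fun x y hxy => ?_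
    have hfxy : f x = f y := congrArg Subtype.val hxy
    have hsub := hinj (x - y : S) (x - y : S).2 (x - y).2 (by simpa [sub_eq_zero] using hfxy)
    simpa [sub_eq_zero] using hsub
  have hrange : finrank K (LinearMap.range ψ) ≤ 1 := by
    simpa using Submodule.finrank_le (LinearMap.range ψ)
  have := ψ.finrank_range_add_finrank_ker
  omega

lemma finrank_le_one_of_injOn (S : Submodule K M) (φ : M →ₗ[K] K)
    (hinj : ∀ x ∈ S, φ x = 0 → x = 0) : finrank K S ≤ 1 := by
  simpa using finrank_le_finrank_add_one_of_injOn_ker S (⊥ : Submodule K M) φ 0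
    (fun _ _ _ => Submodule.zero_mem _) fun x hx h _ => hinj x hx h

end LinearAlgebra

lemma Finset.sum_ite_eq_or {α M : Type*} [Fintype α] [AddCommMonoid M] {p q : α} (hpq : p ≠ q)
    [DecidablePred fun a => a = p ∨ a = q] (f : α → M) :
    ∑ a, (if a = p ∨ a = q then f a else 0) = f p + f q := by
  classical
  rw [← Finset.sum_filter, show univ.filter (fun a => a = p ∨ a = q) = {p, q} by ext; simp,
    Finset.sum_pair hpq]

lemma Fin.eq_zero_of_sum_three_eq_zero {M : Type*} [AddCommGroup M] {x : Fin 3 → M}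
    (hS : ∑ j, x j = 0) {i j : Fin 3} (hij : i ≠ j) (hi : x i = 0) (hj : x j = 0) : x = 0 := by
  rw [Fin.sum_univ_three] at hS
  funext l
  fin_cases i <;> fin_cases j <;> fin_cases l <;> simp_all

section Eigenvectors
variable {V W : Type*} [Fintype V] [Fintype W]

lemma mem_eigenspace_adjMat {G : SimpleGraph V} {μ : ℝ} {x : V → ℝ} :
    x ∈ End.eigenspace (adjMat G).mulVecLin μ ↔
      ∀ u, ∑ v, (if G.Adj u v then x v else 0) = μ * x u := by
  simp [funext_iff, adjMat, Matrix.mulVec, dotProduct, ite_mul]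

noncomputable def eigenspaceOpposite (G : SimpleGraph V) (μ : ℝ) (p q : V) :
    Submodule ℝ (V → ℝ) :=
  End.eigenspace (adjMat G).mulVecLin μ ⊓
    LinearMap.ker (LinearMap.proj (R := ℝ) (φ := fun _ : V => ℝ) p + LinearMap.proj q)

lemma mem_eigenspaceOpposite {G : SimpleGraph V} {μ : ℝ} {p q : V} {x : V → ℝ} :
    x ∈ eigenspaceOpposite G μ p q ↔
      x ∈ End.eigenspace (adjMat G).mulVecLin μ ∧ x p + x q = 0 := by
  simp [eigenspaceOpposite]

lemma eigenspaceOpposite_comm (G : SimpleGraph V) (μ : ℝ) (p q : V) :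
    eigenspaceOpposite G μ p q = eigenspaceOpposite G μ q p := by
  ext x
  simp only [mem_eigenspaceOpposite, add_comm (x p)]

lemma adjMat_eq_submatrix {G : SimpleGraph V} {H : SimpleGraph W} (e : G ≃g H) :
    adjMat G = (adjMat H).submatrix e e := by
  ext u v
  simp [adjMat, e.map_adj_iff]

lemma finrank_eigenspaceOpposite_le_of_iso {G : SimpleGraph V} {H : SimpleGraph W} (e : G ≃g H)
    (μ : ℝ) (p q : V) :
    finrank ℝ (eigenspaceOpposite G μ p q) ≤
      finrank ℝ (eigenspaceOpposite H μ (e p) (e q)) := by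
  let ρ := LinearEquiv.funCongrLeft ℝ ℝ e.symm.toEquiv
  rw [← ρ.finrank_map_eq]
  refine Submodule.finrank_mono ?_
  rintro _ ⟨x, hx, rfl⟩
  rw [SetLike.mem_coe, mem_eigenspaceOpposite, End.mem_eigenspace_iff] at hx
  rw [mem_eigenspaceOpposite, End.mem_eigenspace_iff]
  refine ⟨funext fun w => ?_, by simpa [ρ] using hx.2⟩
  have hw := congrFun hx.1 (e.toEquiv.symm w)
  rw [adjMat_eq_submatrix e, Matrix.mulVecLin_apply, show (e : V → W) = e.toEquiv from rfl,
    Matrix.submatrix_mulVec_equiv] at hw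
  simp only [Pi.smul_apply, smul_eq_mul, Function.comp_apply, Equiv.apply_symm_apply] at hw
  exact hw

end Eigenvectors

section JoinStar
variable {V : Type*} {B : SimpleGraph V} {p q : V} {s : ℕ}

-- In `joinStar B p q s`, the centre of the star is `.inr (.inl ())` and its leaves `.inr (.inr k)`.

@[simp] lemma joinStar_adj_inl_inl {a b : V} :
    (joinStar B p q s).Adj (.inl a) (.inl b) ↔ B.Adj a b := by
  simpa [joinStar, B.adj_comm b a] using fun h => h.ne

@[simp] lemma joinStar_adj_center_inl {a : V} :
    (joinStar B p q s).Adj (.inr (.inl ())) (.inl a) ↔ a = p ∨ a = q := by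
  simp [joinStar]

@[simp] lemma joinStar_not_adj_leaf_inl {a : V} {k : Fin s} :
    ¬ (joinStar B p q s).Adj (.inr (.inr k)) (.inl a) := by
  simp [joinStar]

@[simp] lemma joinStar_not_adj_leaf_leaf {k l : Fin s} :
    ¬ (joinStar B p q s).Adj (.inr (.inr k)) (.inr (.inr l)) := by
  simp [joinStar]

variable [Fintype V] {μ : ℝ}

lemma joinStar_eigenvector_of_center_eq_zero (hpq : p ≠ q) (hμ : μ ≠ 0)
    {x : V ⊕ (Unit ⊕ Fin s) → ℝ}
    (hx : x ∈ End.eigenspace (adjMat (joinStar B p q s)).mulVecLin μ)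
    (hc : x (.inr (.inl ())) = 0) :
    (∀ k, x (.inr (.inr k)) = 0) ∧ x ∘ Sum.inl ∈ eigenspaceOpposite B μ p q := by
  have hrow := mem_eigenspace_adjMat.1 hx
  have hleaf : ∀ k, x (.inr (.inr k)) = 0 := fun k => by
    simpa [Fintype.sum_sum_type, hc, hμ] using (hrow (.inr (.inr k))).symm
  refine ⟨hleaf, mem_eigenspaceOpposite.2 ⟨mem_eigenspace_adjMat.2 fun v => ?_, ?_⟩⟩
  · simpa [Fintype.sum_sum_type, hc, hleaf] using hrow (.inl v)
  · simpa [Fintype.sum_sum_type, hc, hleaf, Finset.sum_ite_eq_or hpq] using hrow (.inr (.inl ()))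

lemma eigMult_joinStar_le (hpq : p ≠ q) (hμ : μ ≠ 0) :
    eigMult (joinStar B p q s) μ ≤ finrank ℝ (eigenspaceOpposite B μ p q) + 1 := by
  refine finrank_le_finrank_add_one_of_injOn_ker _ _
    (LinearMap.proj (R := ℝ) (φ := fun _ => ℝ) (.inr (.inl ()) : V ⊕ (Unit ⊕ Fin s)))
    (LinearMap.funLeft ℝ ℝ Sum.inl)
    (fun x hx hc => (joinStar_eigenvector_of_center_eq_zero hpq hμ hx hc).2)
    fun x hx hc hres => funext fun u => ?_
  rcases u with v | _ | k
  · exact congrFun hres v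
  · exact hc
  · exact (joinStar_eigenvector_of_center_eq_zero hpq hμ hx hc).1 k

end JoinStar

section Cycle
open Fin.CommRing
variable {n : ℕ} {μ : ℝ} {y : Fin (n + 3) → ℝ}

lemma cycleGraph_adj_iff {u v : Fin (n + 2)} :
    (SimpleGraph.cycleGraph (n + 2)).Adj u v ↔ v = u + 1 ∨ v = u - 1 := by
  rw [SimpleGraph.cycleGraph_adj, sub_eq_iff_eq_add, sub_eq_iff_eq_add', eq_sub_iff_add_eq,
    add_comm 1 v, eq_comm (a := u), or_comm]

lemma cycleGraph_eigenvector_apply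
    (hy : y ∈ End.eigenspace (adjMat (SimpleGraph.cycleGraph (n + 3))).mulVecLin μ)
    (u : Fin (n + 3)) : μ * y u = y (u + 1) + y (u - 1) := by
  have hne : u + 1 ≠ u - 1 := fun h => by
    have h2 : (2 : Fin (n + 3)) = 0 := by linear_combination h
    rw [Fin.ext_iff, Fin.val_two] at h2
    simp at h2
  rw [← mem_eigenspace_adjMat.1 hy u]
  simp only [cycleGraph_adj_iff]
  exact Finset.sum_ite_eq_or hne _

lemma cycleGraph_eigenvector_eq_zero_of_adjacent
    (hy : y ∈ End.eigenspace (adjMat (SimpleGraph.cycleGraph (n + 3))).mulVecLin μ)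
    {r : Fin (n + 3)} (h₀ : y r = 0) (h₁ : y (r + 1) = 0) : y = 0 := by
  have hprop : ∀ d : ℕ, y (r + d) = 0 ∧ y (r + d + 1) = 0 := by
    intro d
    induction d with
    | zero => simpa using ⟨h₀, h₁⟩
    | succ d ih =>
      have hrow := cycleGraph_eigenvector_apply hy (r + d + 1)
      rw [add_sub_cancel_right, ih.1, ih.2, mul_zero] at hrow
      rw [Nat.cast_succ, ← add_assoc]
      exact ⟨ih.2, by linarith⟩
  funext j
  simpa using (hprop (j - r).val).1

lemma cycleGraph_eigenvector_eq_zero_of_dist_two (hμ : μ ≠ 0)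
    (hy : y ∈ End.eigenspace (adjMat (SimpleGraph.cycleGraph (n + 3))).mulVecLin μ)
    {r : Fin (n + 3)} (h₀ : y r = 0) (h₂ : y (r + 1 + 1) = 0) : y = 0 := by
  have hrow := cycleGraph_eigenvector_apply hy (r + 1)
  rw [add_sub_cancel_right, h₀, h₂, add_zero, mul_eq_zero] at hrow
  exact cycleGraph_eigenvector_eq_zero_of_adjacent hy h₀ (hrow.resolve_left hμ)

end Cycle

lemma finrank_eigenspaceOpposite_cycleGraph_five_le_one {μ : ℝ} (hμ : μ ≠ 0) {p q : Fin 5}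
    (hpq : p ≠ q) : finrank ℝ (eigenspaceOpposite (SimpleGraph.cycleGraph 5) μ p q) ≤ 1 := by
  have hclose : ∀ p q : Fin 5, p ≠ q →
      q = p + 1 ∨ q = p + 1 + 1 ∨ p = q + 1 ∨ p = q + 1 + 1 := by
    decide
  refine finrank_le_one_of_injOn _ (LinearMap.proj p) fun y hy (hp : y p = 0) => ?_
  obtain ⟨heig, hsum⟩ := mem_eigenspaceOpposite.1 hy
  have hq : y q = 0 := by linarith
  rcases hclose p q hpq with rfl | rfl | rfl | rfl
  · exact cycleGraph_eigenvector_eq_zero_of_adjacent heig hp hq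
  · exact cycleGraph_eigenvector_eq_zero_of_dist_two hμ heig hp hq
  · exact cycleGraph_eigenvector_eq_zero_of_adjacent heig hq hp
  · exact cycleGraph_eigenvector_eq_zero_of_dist_two hμ heig hq hp

section TriStar
variable {a : ℕ} {μ : ℝ} {y : Fin 3 ⊕ Fin 3 × Fin a → ℝ}

@[simp] lemma triStar_adj_inl_inl {i j : Fin 3} :
    (triStar a).Adj (.inl i) (.inl j) ↔ i ≠ j := by
  simp [triStar]

@[simp] lemma triStar_adj_inl_inr {i j : Fin 3} {k : Fin a} :
    (triStar a).Adj (.inl i) (.inr (j, k)) ↔ j = i := by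
  simp [triStar]

@[simp] lemma triStar_adj_inr_inl {i j : Fin 3} {k : Fin a} :
    (triStar a).Adj (.inr (i, k)) (.inl j) ↔ i = j := by
  simp [triStar]

@[simp] lemma triStar_not_adj_inr_inr {u v : Fin 3 × Fin a} :
    ¬ (triStar a).Adj (.inr u) (.inr v) := by
  simp [triStar]

lemma triStar_eigenvector_leaf (hy : y ∈ End.eigenspace (adjMat (triStar a)).mulVecLin μ)
    (i : Fin 3) (k : Fin a) : μ * y (.inr (i, k)) = y (.inl i) := by
  simpa [Fintype.sum_sum_type] using (mem_eigenspace_adjMat.1 hy (.inr (i, k))).symm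

lemma triStar_eigenvector_triangle (hy : y ∈ End.eigenspace (adjMat (triStar a)).mulVecLin μ)
    (i : Fin 3) : (μ ^ 2 + μ - a) * y (.inl i) = μ * ∑ j, y (.inl j) := by
  have hrow := mem_eigenspace_adjMat.1 hy (.inl i)
  have hcompl : ∀ j,
      (if i = j then 0 else y (.inl j)) = y (.inl j) - if i = j then y (.inl j) else 0 :=
    fun j => by split_ifs <;> simp
  have hleaves : μ * ∑ k, y (.inr (i, k)) = a * y (.inl i) := by
    simp [Finset.mul_sum, triStar_eigenvector_leaf hy]
  simp only [Fintype.sum_sum_type, Fintype.sum_prod_type, triStar_adj_inl_inl, triStar_adj_inl_inr,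
    ne_eq, ite_not, hcompl, Finset.sum_sub_distrib, Finset.sum_ite_eq, Finset.sum_ite_eq',
    Finset.sum_ite_irrel, Finset.sum_const_zero, Finset.mem_univ, if_true] at hrow
  linear_combination hleaves - μ * hrow

lemma triStar_eigenvector_eq_zero (hμ : μ ≠ 0)
    (hy : y ∈ End.eigenspace (adjMat (triStar a)).mulVecLin μ) (h : ∀ i, y (.inl i) = 0) :
    y = 0 := by
  funext v
  rcases v with i | ⟨i, k⟩
  · exact h i
  · have hleaf := triStar_eigenvector_leaf hy i k
    rw [h i, mul_eq_zero] at hleaf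
    exact hleaf.resolve_left hμ

lemma triStar_exists_propagate_inl_inr (ht : μ ^ 2 + μ - a = 0) (i j : Fin 3) (k : Fin a) :
    ∃ i' j' : Fin 3, i' ≠ j' ∧
      ∀ y ∈ eigenspaceOpposite (triStar a) μ (.inl i) (.inr (j, k)),
        y (.inl i') = 0 → y (.inl j') = 0 := by
  by_cases hij : i = j
  · subst hij
    have hμ : μ + 1 ≠ 0 := fun h => by
      obtain rfl : a = 0 := by
        rw [eq_neg_of_add_eq_zero_left h] at ht
        exact_mod_cast (by linarith : (a : ℝ) = 0)
      exact k.elim0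
    refine ⟨i + 1, i, add_ne_left.2 one_ne_zero, fun y hy _ => ?_⟩
    obtain ⟨heig, hsum⟩ := mem_eigenspaceOpposite.1 hy
    have h : (μ + 1) * y (.inl i) = 0 := by
      linear_combination μ * hsum - triStar_eigenvector_leaf heig i k
    exact (mul_eq_zero.1 h).resolve_left hμ
  · refine ⟨i, j, hij, fun y hy hi => ?_⟩
    obtain ⟨heig, hsum⟩ := mem_eigenspaceOpposite.1 hy
    linear_combination μ * hsum - triStar_eigenvector_leaf heig j k - μ * hi

lemma triStar_exists_propagate (ht : μ ^ 2 + μ - a = 0) {p q : Fin 3 ⊕ Fin 3 × Fin a}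
    (hpq : p ≠ q) :
    ∃ i j : Fin 3, i ≠ j ∧ ∀ y ∈ eigenspaceOpposite (triStar a) μ p q,
      y (.inl i) = 0 → y (.inl j) = 0 := by
  rcases p with i | ⟨i, k⟩ <;> rcases q with j | ⟨j, l⟩
  · refine ⟨i, j, fun h => hpq (h ▸ rfl), fun y hy hi => ?_⟩
    linear_combination (mem_eigenspaceOpposite.1 hy).2 - hi
  · exact triStar_exists_propagate_inl_inr ht i j l
  · rw [eigenspaceOpposite_comm]
    exact triStar_exists_propagate_inl_inr ht j i k
  · have hsum : ∀ y ∈ eigenspaceOpposite (triStar a) μ (.inr (i, k)) (.inr (j, l)),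
        y (.inl i) + y (.inl j) = 0 := fun y hy => by
      obtain ⟨heig, hsum⟩ := mem_eigenspaceOpposite.1 hy
      linear_combination
        μ * hsum - triStar_eigenvector_leaf heig i k - triStar_eigenvector_leaf heig j l
    by_cases hij : i = j
    · subst hij
      exact ⟨i + 1, i, add_ne_left.2 one_ne_zero, fun y hy _ => by linarith [hsum y hy]⟩
    · exact ⟨i, j, hij, fun y hy hi => by linarith [hsum y hy]⟩

lemma finrank_eigenspaceOpposite_triStar_le_one (hμ : μ ≠ 0) {p q : Fin 3 ⊕ Fin 3 × Fin a}
    (hpq : p ≠ q) : finrank ℝ (eigenspaceOpposite (triStar a) μ p q) ≤ 1 := by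
  by_cases ht : μ ^ 2 + μ - a = 0
  · obtain ⟨i, j, hij, hprop⟩ := triStar_exists_propagate ht hpq
    refine finrank_le_one_of_injOn _ (.proj (.inl i)) fun y hy hi => ?_
    have heig := (mem_eigenspaceOpposite.1 hy).1
    have hS : ∑ j, y (.inl j) = 0 := by
      have h := triStar_eigenvector_triangle heig i
      rw [ht, zero_mul, eq_comm, mul_eq_zero] at h
      exact h.resolve_left hμ
    refine triStar_eigenvector_eq_zero hμ heig fun l => ?_
    exact congrFun (Fin.eq_zero_of_sum_three_eq_zero hS hij hi (hprop y hy hi)) l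
  · refine finrank_le_one_of_injOn _ (.proj (.inl 0)) fun y hy h0 => ?_
    have heig := (mem_eigenspaceOpposite.1 hy).1
    refine triStar_eigenvector_eq_zero hμ heig fun i => ?_
    have h := (triStar_eigenvector_triangle heig i).trans (triStar_eigenvector_triangle heig 0).symm
    rw [show y (.inl 0) = 0 from h0, mul_zero, mul_eq_zero] at h
    exact h.resolve_left ht

end TriStar

theorem stmt12 {V : Type*} [Fintype V] (B : SimpleGraph V)
    (hB : (∃ a, Nonempty (B ≃g triStar a)) ∨ Nonempty (B ≃g SimpleGraph.cycleGraph 5))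
    (p q : V) (hpq : p ≠ q) (s : ℕ) (μ : ℝ) (hμ : μ ≠ 0) :
    eigMult (joinStar B p q s) μ ≤ 2 := by
  have hopp : finrank ℝ (eigenspaceOpposite B μ p q) ≤ 1 := by
    rcases hB with ⟨a, ⟨e⟩⟩ | ⟨⟨e⟩⟩
    · exact (finrank_eigenspaceOpposite_le_of_iso e μ p q).trans
        (finrank_eigenspaceOpposite_triStar_le_one hμ (e.injective.ne hpq))
    · exact (finrank_eigenspaceOpposite_le_of_iso e μ p q).trans
        (finrank_eigenspaceOpposite_cycleGraph_five_le_one hμ (e.injective.ne hpq))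
  have := eigMult_joinStar_le (B := B) (s := s) hpq hμ
  omega
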